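/- Let n = 2, k ≥ 1, m ≥ 0, let S_1, S_2 ⊆ S be action sets, and set β := min(m/k, 1). Let (x_i^ag, z_i^ag)_{i=1}^2 be any augmented greedy profile for (f, (S_1, S_2), k, m). Then f(x_1^ag ∪ x_2^ag) ≥ OPT(f,(S_i),k) · (1 + β)/(2 + β); in particular, if m ≥ k then f(x_1^ag ∪ x_2^ag) ≥ (2/3)·OPT(f,(S_i),k). -/

import Mathlib

open Finset

variable {α : Type*}

/-- `f` is monotone on finsets. -/
def IsMonotoneFn (f : Finset α → ℝ) : Prop := ∀ A B : Finset α, A ⊆ B → f A ≤ f B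

/-- `f` is submodular. -/
def IsSubmodularFn [DecidableEq α] (f : Finset α → ℝ) : Prop :=
  ∀ A B : Finset α, A ⊆ B → ∀ s ∉ B, f (insert s A) - f A ≥ f (insert s B) - f B

/-- Marginal contribution Δ(A|B) = f(A ∪ B) − f(B). -/
def marg [DecidableEq α] (f : Finset α → ℝ) (A B : Finset α) : ℝ := f (A ∪ B) - f B

/-- Δ^l(A|B): best marginal of a subset of `A` of size at most `l`. -/
noncomputable def margSup [DecidableEq α] (f : Finset α → ℝ) (l : ℕ) (A B : Finset α) : ℝ :=
  (A.powerset.filter (fun C => C.card ≤ l)).sup' ⟨∅, by simp⟩ (fun C => marg f C B)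

/-- Union of the first `i` sets: x_0 ∪ ⋯ ∪ x_{i-1}. -/
def pref [DecidableEq α] (x : ℕ → Finset α) (i : ℕ) : Finset α := (Finset.range i).biUnion x

/-- A nominal greedy profile. -/
def NomGreedy [DecidableEq α] (f : Finset α → ℝ) (Ss : ℕ → Finset α) (k n : ℕ)
    (x : ℕ → Finset α) : Prop :=
  ∀ i < n, x i ⊆ Ss i ∧ (x i).card ≤ k ∧
    ∀ c : Finset α, c ⊆ Ss i → c.card ≤ k → f (c ∪ pref x i) ≤ f (x i ∪ pref x i)

/-- An augmented greedy profile. -/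
def AugGreedy [DecidableEq α] (f : Finset α → ℝ) (Ss : ℕ → Finset α) (k m n : ℕ)
    (x z : ℕ → Finset α) : Prop :=
  ∀ i < n,
    (x i ⊆ Ss i ∪ pref z i ∧ (x i).card ≤ k ∧
      ∀ c : Finset α, c ⊆ Ss i ∪ pref z i → c.card ≤ k →
        f (c ∪ pref x i) ≤ f (x i ∪ pref x i)) ∧
    ∃ zk zr : Finset α,
      z i = zk ∪ zr ∧ zk ⊆ Ss i ∧ zk.card ≤ min k m ∧
      (∀ w : Finset α, w ⊆ Ss i → w.card ≤ min k m →
        marg f w (pref x (i + 1)) ≤ marg f zk (pref x (i + 1))) ∧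
      zr ⊆ Ss i ∧ zr.card ≤ m - k

/-- The optimal value OPT(f, (S_i), k) over feasible profiles with n agents. -/
noncomputable def OPTval [DecidableEq α] [Fintype α] (f : Finset α → ℝ) (Ss : ℕ → Finset α)
    (n k : ℕ) : ℝ :=
  ((Finset.univ : Finset (Fin n → Finset α)).filter
      (fun y => ∀ i : Fin n, y i ⊆ Ss (i : ℕ) ∧ (y i).card ≤ k)).sup'
    ⟨(fun _ => ∅), by simp⟩ (fun y => f (Finset.univ.biUnion (fun i => y i)))


section Submodular

variable [DecidableEq α] {f : Finset α → ℝ}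

lemma marg_nonneg (hmono : IsMonotoneFn f) (A B : Finset α) : 0 ≤ marg f A B :=
  sub_nonneg.2 (hmono _ _ Finset.subset_union_right)

lemma marg_le_marg_of_subset (hmono : IsMonotoneFn f) (hsub : IsSubmodularFn f)
    (A : Finset α) {C D : Finset α} (hCD : C ⊆ D) : marg f A D ≤ marg f A C := by
  induction A using Finset.induction_on with
  | empty => simp [marg]
  | @insert s A _ ih =>
    have hstep : f (insert s (A ∪ D)) - f (A ∪ D) ≤ f (insert s (A ∪ C)) - f (A ∪ C) := by
      by_cases hsD : s ∈ A ∪ D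
      · rw [Finset.insert_eq_self.2 hsD, sub_self]
        exact sub_nonneg.2 (hmono _ _ (Finset.subset_insert _ _))
      · exact hsub _ _ (Finset.union_subset_union_right hCD) s hsD
    simp only [marg, Finset.insert_union] at ih ⊢
    linarith

lemma isMonotoneFn_marg (hmono : IsMonotoneFn f) (B : Finset α) :
    IsMonotoneFn (marg f · B) :=
  fun _ _ h => sub_le_sub_right (hmono _ _ (Finset.union_subset_union_left h)) _

lemma isSubmodularFn_marg (hsub : IsSubmodularFn f) (B : Finset α) :
    IsSubmodularFn (marg f · B) := by
  intro A A' hAA' s hs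
  simp only [marg, Finset.insert_union]
  by_cases hsB : s ∈ B
  · rw [Finset.insert_eq_self.2 (Finset.mem_union_right _ hsB),
      Finset.insert_eq_self.2 (Finset.mem_union_right _ hsB)]
    linarith
  · have := hsub (A ∪ B) (A' ∪ B) (Finset.union_subset_union_left hAA') s (by simp [hs, hsB])
    linarith

lemma sum_sub_erase_le (hsub : IsSubmodularFn f) (Y : Finset α) :
    ∑ a ∈ Y, (f Y - f (Y.erase a)) ≤ f Y - f ∅ := by
  induction Y using Finset.induction_on with
  | empty => simp
  | @insert b T hb ih =>
    have hterm : ∀ a ∈ T, f (insert b T) - f ((insert b T).erase a) ≤ f T - f (T.erase a) := by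
      intro a ha
      have hab : a ≠ b := ne_of_mem_of_not_mem ha hb
      have h := hsub (T.erase a) (insert b (T.erase a)) (Finset.subset_insert _ _) a (by simp [hab])
      rw [Finset.insert_erase ha, Finset.insert_comm, Finset.insert_erase ha] at h
      rw [Finset.erase_insert_of_ne hab.symm]
      linarith
    rw [Finset.sum_insert hb, Finset.erase_insert hb]
    linarith [Finset.sum_le_sum hterm]

lemma exists_mem_card_mul_sub_erase_le (hsub : IsSubmodularFn f) {Y : Finset α}
    (hY : Y.Nonempty) : ∃ a ∈ Y, (Y.card : ℝ) * (f Y - f (Y.erase a)) ≤ f Y - f ∅ := by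
  have hcard : (0 : ℝ) < Y.card := by exact_mod_cast hY.card_pos
  obtain ⟨a, ha, hle⟩ := Finset.exists_le_of_sum_le hY
    (f := fun a => f Y - f (Y.erase a)) (g := fun _ => (f Y - f ∅) / Y.card) <| by
      rw [Finset.sum_const, nsmul_eq_mul, mul_div_cancel₀ _ hcard.ne']
      exact sum_sub_erase_le hsub Y
  exact ⟨a, ha, by rwa [le_div_iff₀' hcard] at hle⟩

/-- Removing elements one at a time, each time one of least marginal value, keeps the
average value per element from dropping. -/
lemma exists_subset_card_eq_mul_le (hmono : IsMonotoneFn f) (hsub : IsSubmodularFn f)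
    {l : ℕ} {Y : Finset α} (hl : l ≤ Y.card) :
    ∃ W ⊆ Y, W.card = l ∧ (l : ℝ) * (f Y - f ∅) ≤ Y.card * (f W - f ∅) := by
  obtain ⟨d, hd⟩ := Nat.exists_eq_add_of_le hl
  induction d generalizing Y with
  | zero => exact ⟨Y, subset_rfl, hd, by rw [hd, add_zero]⟩
  | succ d ih =>
    obtain ⟨a, ha, hle⟩ := exists_mem_card_mul_sub_erase_le hsub
      (Finset.card_pos.1 (by omega : 0 < Y.card))
    have hcard : (Y.erase a).card = l + d := by rw [Finset.card_erase_of_mem ha, hd]; rfl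
    obtain ⟨W, hWY, hWl, hW⟩ := ih (by omega) hcard
    refine ⟨W, hWY.trans (Finset.erase_subset a Y), hWl, ?_⟩
    have hW0 : 0 ≤ f W - f ∅ := sub_nonneg.2 (hmono _ _ (Finset.empty_subset W))
    rw [hcard] at hW
    rw [hd] at hle ⊢
    push_cast at hle hW ⊢
    rcases Nat.eq_zero_or_pos (l + d) with h0 | hpos
    · have hl0 : (l : ℝ) = 0 := by exact_mod_cast (Nat.eq_zero_of_add_eq_zero h0).1
      rw [hl0, zero_mul]
      positivity
    · have hpos' : (0 : ℝ) < l + d := by exact_mod_cast hpos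
      refine le_of_mul_le_mul_left ?_ hpos'
      nlinarith

lemma min_div_mul_marg_le (hmono : IsMonotoneFn f) (hsub : IsSubmodularFn f)
    {S Y z B : Finset α} {k l : ℕ} (hk : 0 < k) (hYS : Y ⊆ S) (hYk : Y.card ≤ k)
    (hz : ∀ w ⊆ S, w.card ≤ min k l → marg f w B ≤ marg f z B) :
    min ((l : ℝ) / k) 1 * marg f Y B ≤ marg f z B := by
  have hk' : (0 : ℝ) < k := by exact_mod_cast hk
  have hmin : min ((l : ℝ) / k) 1 = (min k l : ℕ) / k := by
    rw [← div_self hk'.ne', min_div_div_right hk'.le, Nat.cast_min, min_comm]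
  rw [hmin, div_mul_eq_mul_div, div_le_iff₀' hk']
  have hmin_le : ((min k l : ℕ) : ℝ) ≤ k := by exact_mod_cast min_le_left k l
  rcases le_or_gt Y.card (min k l) with hY | hY
  · calc ((min k l : ℕ) : ℝ) * marg f Y B ≤ k * marg f Y B :=
          mul_le_mul_of_nonneg_right hmin_le (marg_nonneg hmono Y B)
      _ ≤ k * marg f z B := mul_le_mul_of_nonneg_left (hz Y hYS hY) hk'.le
  · obtain ⟨W, hWY, hWc, hW⟩ :=
      exists_subset_card_eq_mul_le (isMonotoneFn_marg hmono B) (isSubmodularFn_marg hsub B) hY.le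
    have hYk' : (Y.card : ℝ) ≤ k := by exact_mod_cast hYk
    simp only [marg, Finset.empty_union, sub_self, sub_zero] at hW
    calc ((min k l : ℕ) : ℝ) * marg f Y B ≤ Y.card * marg f W B := hW
      _ ≤ k * marg f W B := mul_le_mul_of_nonneg_right hYk' (marg_nonneg hmono W B)
      _ ≤ k * marg f z B := mul_le_mul_of_nonneg_left (hz W (hWY.trans hYS) hWc.le) hk'.le

end Submodular

section TwoAgents

variable [DecidableEq α] {f : Finset α → ℝ} {Ss x z : ℕ → Finset α} {k m : ℕ}

/-- With `D := Δ(Y | x₀)`: greediness of `x₀` gives `D ≤ f x₀`, and since the best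
`min k m`-subset of `S₀` given `x₀` was offered to agent 1, `β D ≤ f (x₀ ∪ x₁) - f x₀`.
Adding, `(1 + β) D ≤ f (x₀ ∪ x₁)`, while `f (Y ∪ Y₁) ≤ D + f (x₀ ∪ x₁)`. -/
lemma AugGreedy.mul_le_of_feasible (hnorm : f ∅ = 0) (hmono : IsMonotoneFn f)
    (hsub : IsSubmodularFn f) (hk : 0 < k) (hag : AugGreedy f Ss k m 2 x z)
    {Y Y₁ : Finset α} (hY : Y ⊆ Ss 0) (hYk : Y.card ≤ k) (hY₁ : Y₁ ⊆ Ss 1) (hY₁k : Y₁.card ≤ k) :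
    (1 + min ((m : ℝ) / k) 1) * f (Y ∪ Y₁) ≤ (2 + min ((m : ℝ) / k) 1) * f (x 0 ∪ x 1) := by
  obtain ⟨⟨-, -, hx₀⟩, zk, zr, hz₀, -, hzk, hzk_max, -⟩ := hag 0 (by norm_num)
  obtain ⟨⟨-, -, hx₁⟩, -⟩ := hag 1 (by norm_num)
  simp only [pref, Finset.range_zero, Finset.range_one, Finset.biUnion_empty,
    Finset.singleton_biUnion, Finset.union_empty, zero_add] at hx₀ hx₁ hzk_max
  set β := min ((m : ℝ) / k) 1
  set G := f (x 0 ∪ x 1)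
  have hx₁_best : ∀ c ⊆ Ss 1 ∪ z 0, c.card ≤ k → f (c ∪ x 0) ≤ G := fun c hc hck => by
    simpa only [G, Finset.union_comm (x 0)] using hx₁ c hc hck
  have hD : marg f Y (x 0) ≤ f (x 0) := by
    have := marg_le_marg_of_subset hmono hsub Y (Finset.empty_subset (x 0))
    simp only [marg, Finset.union_empty, hnorm, sub_zero] at this ⊢
    linarith [hx₀ Y hY hYk]
  have hβD : β * marg f Y (x 0) ≤ G - f (x 0) := by
    have hzk_le : f (zk ∪ x 0) ≤ G :=
      hx₁_best zk (hz₀ ▸ Finset.subset_union_left.trans Finset.subset_union_right)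
        (hzk.trans (min_le_left k m))
    have := min_div_mul_marg_le hmono hsub hk hY hYk hzk_max
    simp only [marg] at this ⊢
    linarith
  have hopt : f (Y ∪ Y₁) ≤ marg f Y (x 0) + G := by
    have h₁ : f (Y ∪ Y₁) ≤ f (Y ∪ (Y₁ ∪ x 0)) :=
      hmono _ _ (Finset.union_subset_union_right Finset.subset_union_left)
    have h₂ := marg_le_marg_of_subset hmono hsub Y
      (Finset.subset_union_right (s₁ := Y₁) (s₂ := x 0))
    have h₃ := hx₁_best Y₁ (hY₁.trans Finset.subset_union_left) hY₁k
    simp only [marg] at h₂ ⊢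
    linarith
  have hβ : 0 ≤ β := le_min (by positivity) zero_le_one
  nlinarith [mul_le_mul_of_nonneg_left hopt (by linarith : (0 : ℝ) ≤ 1 + β)]

lemma OPTval_two_le [Fintype α] {c : ℝ}
    (h : ∀ Y Y₁ : Finset α, Y ⊆ Ss 0 → Y.card ≤ k → Y₁ ⊆ Ss 1 → Y₁.card ≤ k → f (Y ∪ Y₁) ≤ c) :
    OPTval f Ss 2 k ≤ c := by
  refine Finset.sup'_le _ _ fun y hy => ?_
  obtain ⟨h₀, h₁⟩ := (Finset.mem_filter.1 hy).2 0, (Finset.mem_filter.1 hy).2 1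
  have hunion : Finset.univ.biUnion (fun i : Fin 2 => y i) = y 0 ∪ y 1 := by
    ext t; simp [Fin.exists_fin_two]
  rw [hunion]
  exact h _ _ h₀.1 h₀.2 h₁.1 h₁.2

end TwoAgents

/-- For two agents the augmented greedy algorithm achieves a (1+β)/(2+β) fraction of the
optimum; in particular 2/3 when m ≥ k. -/
theorem stmt17 [DecidableEq α] [Fintype α] (f : Finset α → ℝ)
    (hnorm : f ∅ = 0) (hmono : IsMonotoneFn f) (hsub : IsSubmodularFn f)
    (k m : ℕ) (hk : 1 ≤ k)
    (Ss x z : ℕ → Finset α) (hag : AugGreedy f Ss k m 2 x z) :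
    f (x 0 ∪ x 1) ≥ OPTval f Ss 2 k * ((1 + min ((m : ℝ) / k) 1) / (2 + min ((m : ℝ) / k) 1)) ∧
    (k ≤ m → f (x 0 ∪ x 1) ≥ (2 / 3) * OPTval f Ss 2 k) := by
  set β := min ((m : ℝ) / k) 1
  have hk' : (0 : ℝ) < k := by exact_mod_cast hk
  have hβ : 0 ≤ β := le_min (by positivity) zero_le_one
  have hOPT : (1 + β) * OPTval f Ss 2 k ≤ (2 + β) * f (x 0 ∪ x 1) :=
    (le_div_iff₀' (by linarith)).1 <| OPTval_two_le fun Y Y₁ hY hYk hY₁ hY₁k =>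
      (le_div_iff₀' (by linarith)).2 <| hag.mul_le_of_feasible hnorm hmono hsub hk hY hYk hY₁ hY₁k
  have hbound : OPTval f Ss 2 k * ((1 + β) / (2 + β)) ≤ f (x 0 ∪ x 1) := by
    rw [mul_div_assoc', div_le_iff₀ (by linarith)]
    linarith
  refine ⟨hbound, fun hkm => ?_⟩
  have hβ_one : β = 1 := min_eq_right ((one_le_div hk').2 (by exact_mod_cast hkm))
  rw [hβ_one] at hbound
  linarith
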